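/- Let (V,μ,ν) be a weighted graph that is uniformly locally finite with constant C₁ > 0, let p ∈ [2,∞), and let f₀ ∈ ℓ¹_ν(V) ∩ ℓ^{p−1}_ν(V). Let φ : [0,∞) × V → ℝ satisfy: (i) φ(0,·) = f₀; (ii) ‖φ(t,·)‖_{ℓ¹_ν} ≤ ‖f₀‖_{ℓ¹_ν} and ‖φ(t,·)‖_{ℓ^{p−1}_ν} ≤ ‖f₀‖_{ℓ^{p−1}_ν} for all t ≥ 0; (iii) for every finitely supported h : V → ℝ, the function t ↦ ∑_{v∈V} φ(t,v)h(v)ν(v) is locally absolutely continuous on [0,∞) and for almost every t its derivative equals −(1/2)∑_{v,w∈V} μ(v,w)|φ(t,v)−φ(t,w)|^{p−2}(φ(t,v)−φ(t,w))(h(v)−h(w)). Then mass is conserved: ∑_{v∈V} φ(t,v)ν(v) = ∑_{v∈V} f₀(v)ν(v) for every t ≥ 0 (all series converging absolutely). -/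

import Mathlib

open Filter MeasureTheory Topology

/-!
Test the weak formulation against the indicators `hₙ` of finite sets `Kₙ` exhausting `V`.
The left-hand sides are then partial sums of the masses at times `t` and `0`, so it suffices
that the flux term `∫₀ᵗ ⟨-Δₚ φ(s), hₙ⟩ ds` tends to `0`. This is dominated convergence twice:
an edge `(v, w)` stops contributing once both endpoints lie in `Kₙ`, and
`|φ(v) - φ(w)|^{p-1} ≤ 2^{p-2} (|φ(v)|^{p-1} + |φ(w)|^{p-1})` together with
`∑_w μ(v,w) ≤ ν(v)/C₁` bounds the whole edge sum by `2^{p-2}/C₁ · ‖f₀‖^{p-1}_{ℓ^{p-1}_ν}`,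
uniformly in `n` and `s`.
-/

lemma abs_sub_rpow_le {q : ℝ} (hq : 1 ≤ q) (a b : ℝ) :
    |a - b| ^ q ≤ 2 ^ (q - 1) * (|a| ^ q + |b| ^ q) :=
  calc |a - b| ^ q ≤ (|a| + |b|) ^ q :=
        Real.rpow_le_rpow (abs_nonneg _) (abs_sub _ _) (by linarith)
    _ ≤ 2 ^ (q - 1) * (|a| ^ q + |b| ^ q) := by
        exact_mod_cast
          NNReal.rpow_add_le_mul_rpow_add_rpow ⟨|a|, abs_nonneg a⟩ ⟨|b|, abs_nonneg b⟩ hq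

lemma abs_rpow_sub_mul_le {p : ℝ} (hp : 2 ≤ p) {m c : ℝ} (hm : 0 ≤ m) (hc : |c| ≤ 1)
    (a b : ℝ) :
    |m * |a - b| ^ (p - 2) * (a - b) * c|
      ≤ 2 ^ (p - 2) * (m * (|a| ^ (p - 1) + |b| ^ (p - 1))) := by
  have hpow : |a - b| ^ (p - 2) * |a - b| = |a - b| ^ (p - 1) := by
    rw [← Real.rpow_add_one' (abs_nonneg _) (by linarith)]
    ring_nf
  calc |m * |a - b| ^ (p - 2) * (a - b) * c|
      = m * |a - b| ^ (p - 1) * |c| := by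
        rw [abs_mul, abs_mul, abs_mul, abs_of_nonneg hm,
          abs_of_nonneg (Real.rpow_nonneg (abs_nonneg _) _), mul_assoc m, hpow]
    _ ≤ m * |a - b| ^ (p - 1) := mul_le_of_le_one_right (by positivity) hc
    _ ≤ m * (2 ^ (p - 2) * (|a| ^ (p - 1) + |b| ^ (p - 1))) := by
        gcongr
        have := abs_sub_rpow_le (q := p - 1) (by linarith) a b
        rwa [show p - 1 - 1 = p - 2 by ring] at this
    _ = _ := by ring

namespace WeightedGraph

variable {V : Type*} {μ : V → V → ℝ} {ν : V → ℝ} {C : ℝ}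

lemma tsum_edge_mul_le_div (hC : 0 < C) (hdeg : ∀ v, C * ∑' w, μ v w ≤ ν v) {g : V → ℝ}
    (hg : ∀ v, 0 ≤ g v) (v : V) : ∑' w, μ v w * g v ≤ g v * ν v / C := by
  rw [tsum_mul_right, le_div_iff₀ hC]
  nlinarith [hdeg v, hg v]

lemma summable_edge_mul_left (hμnn : ∀ v w, 0 ≤ μ v w) (hloc : ∀ v, Summable (μ v))
    (hC : 0 < C) (hdeg : ∀ v, C * ∑' w, μ v w ≤ ν v) {g : V → ℝ} (hg : ∀ v, 0 ≤ g v)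
    (hgν : Summable fun v => g v * ν v) :
    Summable fun x : V × V => μ x.1 x.2 * g x.1 :=
  (summable_prod_of_nonneg fun _ => mul_nonneg (hμnn _ _) (hg _)).2
    ⟨fun v => (hloc v).mul_right (g v),
      (hgν.div_const C).of_nonneg_of_le
        (fun v => tsum_nonneg fun w => mul_nonneg (hμnn v w) (hg v)) (tsum_edge_mul_le_div hC hdeg hg)⟩

lemma tsum_edge_mul_left_le (hμnn : ∀ v w, 0 ≤ μ v w) (hloc : ∀ v, Summable (μ v))
    (hC : 0 < C) (hdeg : ∀ v, C * ∑' w, μ v w ≤ ν v) {g : V → ℝ} (hg : ∀ v, 0 ≤ g v)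
    (hgν : Summable fun v => g v * ν v) :
    ∑' x : V × V, μ x.1 x.2 * g x.1 ≤ (∑' v, g v * ν v) / C := by
  have hsum := summable_edge_mul_left hμnn hloc hC hdeg hg hgν
  rw [hsum.tsum_prod' fun v => (hloc v).mul_right (g v), ← tsum_div_const]
  exact hsum.prod.tsum_le_tsum (tsum_edge_mul_le_div hC hdeg hg) (hgν.div_const C)

lemma edge_mul_right_eq_comp_prodComm (hμsymm : ∀ v w, μ v w = μ w v) (g : V → ℝ) :
    (fun x : V × V => μ x.1 x.2 * g x.2) = (fun x => μ x.1 x.2 * g x.1) ∘ Equiv.prodComm V V :=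
  funext fun x => by simp [hμsymm x.1 x.2]

lemma summable_edge_mul_right (hμsymm : ∀ v w, μ v w = μ w v) (hμnn : ∀ v w, 0 ≤ μ v w)
    (hloc : ∀ v, Summable (μ v)) (hC : 0 < C) (hdeg : ∀ v, C * ∑' w, μ v w ≤ ν v) {g : V → ℝ}
    (hg : ∀ v, 0 ≤ g v) (hgν : Summable fun v => g v * ν v) :
    Summable fun x : V × V => μ x.1 x.2 * g x.2 := by
  rw [edge_mul_right_eq_comp_prodComm hμsymm]
  exact (Equiv.prodComm V V).summable_iff.2 (summable_edge_mul_left hμnn hloc hC hdeg hg hgν)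

lemma summable_edge_mul_add (hμsymm : ∀ v w, μ v w = μ w v) (hμnn : ∀ v w, 0 ≤ μ v w)
    (hloc : ∀ v, Summable (μ v)) (hC : 0 < C) (hdeg : ∀ v, C * ∑' w, μ v w ≤ ν v) {g : V → ℝ}
    (hg : ∀ v, 0 ≤ g v) (hgν : Summable fun v => g v * ν v) :
    Summable fun x : V × V => μ x.1 x.2 * (g x.1 + g x.2) := by
  simp only [mul_add]
  exact (summable_edge_mul_left hμnn hloc hC hdeg hg hgν).add
    (summable_edge_mul_right hμsymm hμnn hloc hC hdeg hg hgν)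

lemma tsum_edge_mul_add_le (hμsymm : ∀ v w, μ v w = μ w v) (hμnn : ∀ v w, 0 ≤ μ v w)
    (hloc : ∀ v, Summable (μ v)) (hC : 0 < C) (hdeg : ∀ v, C * ∑' w, μ v w ≤ ν v) {g : V → ℝ}
    (hg : ∀ v, 0 ≤ g v) (hgν : Summable fun v => g v * ν v) :
    ∑' x : V × V, μ x.1 x.2 * (g x.1 + g x.2) ≤ 2 * (∑' v, g v * ν v) / C := by
  simp only [mul_add]
  rw [(summable_edge_mul_left hμnn hloc hC hdeg hg hgν).tsum_add
      (summable_edge_mul_right hμsymm hμnn hloc hC hdeg hg hgν),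
    edge_mul_right_eq_comp_prodComm hμsymm, Function.comp_def,
    (Equiv.prodComm V V).tsum_eq (fun x : V × V => μ x.1 x.2 * g x.1), mul_div_assoc]
  linarith [tsum_edge_mul_left_le hμnn hloc hC hdeg hg hgν]

/-- The pairing `⟨-Δₚ f, h⟩_ν` of the graph `p`-Laplacian with a test function. -/
noncomputable def pDirichletForm (μ : V → V → ℝ) (p : ℝ) (f h : V → ℝ) : ℝ :=
  1 / 2 * ∑' x : V × V,
    μ x.1 x.2 * |f x.1 - f x.2| ^ (p - 2) * (f x.1 - f x.2) * (h x.1 - h x.2)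

lemma abs_pDirichletForm_le (hμsymm : ∀ v w, μ v w = μ w v) (hμnn : ∀ v w, 0 ≤ μ v w)
    (hloc : ∀ v, Summable (μ v)) (hC : 0 < C) (hdeg : ∀ v, C * ∑' w, μ v w ≤ ν v) {p : ℝ}
    (hp : 2 ≤ p) {f h : V → ℝ} (hf : Summable fun v => |f v| ^ (p - 1) * ν v)
    (hh : ∀ v w, |h v - h w| ≤ 1) :
    |pDirichletForm μ p f h| ≤ 2 ^ (p - 2) / C * ∑' v, |f v| ^ (p - 1) * ν v := by
  have hg : ∀ v, 0 ≤ |f v| ^ (p - 1) := fun v => by positivity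
  have hbound := (summable_edge_mul_add hμsymm hμnn hloc hC hdeg hg hf).mul_left (2 ^ (p - 2))
  have hterm := fun x : V × V =>
    abs_rpow_sub_mul_le hp (hμnn x.1 x.2) (hh x.1 x.2) (f x.1) (f x.2)
  calc |pDirichletForm μ p f h|
      ≤ 1 / 2 * ∑' x : V × V,
          2 ^ (p - 2) * (μ x.1 x.2 * (|f x.1| ^ (p - 1) + |f x.2| ^ (p - 1))) := by
        rw [pDirichletForm, abs_mul, abs_of_pos one_half_pos]
        gcongr
        have hsummable : Summable fun x : V × V =>
            μ x.1 x.2 * |f x.1 - f x.2| ^ (p - 2) * (f x.1 - f x.2) * (h x.1 - h x.2) :=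
          hbound.of_norm_bounded hterm
        exact (norm_tsum_le_tsum_norm hsummable.norm).trans
          (hsummable.norm.tsum_le_tsum hterm hbound)
    _ ≤ 1 / 2 * (2 ^ (p - 2) * (2 * (∑' v, |f v| ^ (p - 1) * ν v) / C)) := by
        rw [tsum_mul_left]
        gcongr
        exact tsum_edge_mul_add_le hμsymm hμnn hloc hC hdeg hg hf
    _ = _ := by ring

lemma tendsto_pDirichletForm_zero (hμsymm : ∀ v w, μ v w = μ w v) (hμnn : ∀ v w, 0 ≤ μ v w)
    (hloc : ∀ v, Summable (μ v)) (hC : 0 < C) (hdeg : ∀ v, C * ∑' w, μ v w ≤ ν v) {p : ℝ}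
    (hp : 2 ≤ p) {f : V → ℝ} (hf : Summable fun v => |f v| ^ (p - 1) * ν v)
    {ι : Type*} {l : Filter ι} {h : ι → V → ℝ} (hh : ∀ i v w, |h i v - h i w| ≤ 1)
    (hlim : ∀ v w, ∀ᶠ i in l, h i v = h i w) :
    Tendsto (fun i => pDirichletForm μ p f (h i)) l (𝓝 0) := by
  have hg : ∀ v, 0 ≤ |f v| ^ (p - 1) := fun v => by positivity
  have hsum := tendsto_tsum_of_dominated_convergence
    ((summable_edge_mul_add hμsymm hμnn hloc hC hdeg hg hf).mul_left (2 ^ (p - 2)))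
    (f := fun i x =>
      μ x.1 x.2 * |f x.1 - f x.2| ^ (p - 2) * (f x.1 - f x.2) * (h i x.1 - h i x.2))
    (g := fun _ => 0)
    (fun x => tendsto_const_nhds.congr' <| (hlim x.1 x.2).mono fun i hi => by simp [hi])
    (.of_forall fun i x =>
      abs_rpow_sub_mul_le hp (hμnn x.1 x.2) (hh i x.1 x.2) (f x.1) (f x.2))
  have := hsum.const_mul (1 / 2)
  rwa [tsum_zero, mul_zero] at this

lemma summable_mul_of_summable_abs_mul {f g : V → ℝ} (hg : ∀ v, 0 ≤ g v)
    (h : Summable fun v => |f v| * g v) : Summable fun v => f v * g v :=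
  h.of_norm_bounded fun v => by rw [Real.norm_eq_abs, abs_mul, abs_of_nonneg (hg v)]

lemma abs_indicator_one_sub_le (s : Set V) (v w : V) :
    |s.indicator (1 : V → ℝ) v - s.indicator 1 w| ≤ 1 := by
  by_cases hv : v ∈ s <;> by_cases hw : w ∈ s <;> simp [hv, hw]

lemma tsum_mul_indicator_one_mul (s : Finset V) (f g : V → ℝ) :
    ∑' v, f v * (s : Set V).indicator 1 v * g v = ∑ v ∈ s, f v * g v := by
  rw [tsum_eq_sum (s := s) fun v hv => by simp [hv]]
  exact Finset.sum_congr rfl fun v hv => by simp [hv]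

end WeightedGraph

lemma tendsto_intervalIntegral_zero_of_abs_le {ι : Type*} {l : Filter ι}
    [l.IsCountablyGenerated] {F : ι → ℝ → ℝ} {t B : ℝ} (ht : 0 ≤ t)
    (hF : ∀ i, IntervalIntegrable (F i) volume 0 t) (hbound : ∀ i s, 0 ≤ s → |F i s| ≤ B)
    (hlim : ∀ s, 0 ≤ s → Tendsto (F · s) l (𝓝 0)) :
    Tendsto (fun i => ∫ s in 0..t, F i s) l (𝓝 0) := by
  have hpos : ∀ s ∈ Set.uIoc 0 t, 0 ≤ s := fun s hs => by
    rw [Set.uIoc_of_le ht] at hs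
    exact hs.1.le
  simpa using intervalIntegral.tendsto_integral_filter_of_dominated_convergence (fun _ => B)
    (.of_forall fun i => (hF i).def'.aestronglyMeasurable)
    (.of_forall fun i => .of_forall fun s hs => hbound i s (hpos s hs))
    intervalIntegrable_const (.of_forall fun s hs => hlim s (hpos s hs))

open WeightedGraph

theorem stmt3 {V : Type*} [Countable V]
    (μ : V → V → ℝ) (ν : V → ℝ)
    (hμsymm : ∀ v w, μ v w = μ w v) (hμnn : ∀ v w, 0 ≤ μ v w)
    (hν : ∀ v, 0 < ν v) (hloc : ∀ v, Summable (fun w => μ v w))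
    (C₁ : ℝ) (hC₁ : 0 < C₁) (hulf : ∀ v, C₁ * ∑' w, μ v w ≤ ν v)
    (p : ℝ) (hp : 2 ≤ p)
    (f₀ : V → ℝ)
    (hf₀1 : Summable (fun v => |f₀ v| * ν v))
    (φ : ℝ → V → ℝ)
    -- (ii) uniform `ℓ¹`- and `ℓ^{p−1}`-bounds
    (hb1 : ∀ t, 0 ≤ t → Summable (fun v => |φ t v| * ν v) ∧
      ∑' v, |φ t v| * ν v ≤ ∑' v, |f₀ v| * ν v)
    (hbp : ∀ t, 0 ≤ t → Summable (fun v => |φ t v| ^ (p - 1) * ν v) ∧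
      ∑' v, |φ t v| ^ (p - 1) * ν v ≤ ∑' v, |f₀ v| ^ (p - 1) * ν v)
    -- (iii) for every finitely supported `h`, `t ↦ ∑_v φ(t,v)h(v)ν(v)` is locally
    -- absolutely continuous with a.e. derivative the discrete Dirichlet form;
    -- equivalently, it is given by the integral of its (locally integrable) density.
    (hweak : ∀ h : V → ℝ, (Function.support h).Finite →
      (∀ t, 0 ≤ t → IntervalIntegrable
        (fun s => (1 / 2) * ∑' x : V × V,
          μ x.1 x.2 * |φ s x.1 - φ s x.2| ^ (p - 2) * (φ s x.1 - φ s x.2) *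
            (h x.1 - h x.2))
        MeasureTheory.volume 0 t) ∧
      (∀ t, 0 ≤ t →
        ∑' v, φ t v * h v * ν v = ∑' v, f₀ v * h v * ν v
          - ∫ s in (0 : ℝ)..t, (1 / 2) * ∑' x : V × V,
              μ x.1 x.2 * |φ s x.1 - φ s x.2| ^ (p - 2) * (φ s x.1 - φ s x.2) *
                (h x.1 - h x.2))) :
    ∀ t, 0 ≤ t → ∑' v, φ t v * ν v = ∑' v, f₀ v * ν v := by
  intro t ht
  obtain ⟨K, hK⟩ := exists_seq_tendsto (atTop : Filter (Finset V))
  have hmem : ∀ v, ∀ᶠ n in atTop, v ∈ K n := fun v =>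
    (hK.eventually (eventually_ge_atTop {v})).mono fun n hn => Finset.singleton_subset_iff.1 hn
  set h : ℕ → V → ℝ := fun n => (K n : Set V).indicator 1
  have hh : ∀ n v w, |h n v - h n w| ≤ 1 := fun n => abs_indicator_one_sub_le _
  have hedge : ∀ v w, ∀ᶠ n in atTop, h n v = h n w := fun v w =>
    ((hmem v).and (hmem w)).mono fun n hn => by simp [h, hn.1, hn.2]
  have hweakK := fun n => hweak (h n) ((K n).finite_toSet.subset Set.support_indicator_subset)
  have hmass : ∀ n, ∑ v ∈ K n, φ t v * ν v =
      ∑ v ∈ K n, f₀ v * ν v - ∫ s in (0 : ℝ)..t, pDirichletForm μ p (φ s) (h n) := fun n => by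
    rw [← tsum_mul_indicator_one_mul, ← tsum_mul_indicator_one_mul]
    exact (hweakK n).2 t ht
  have hflux :
      Tendsto (fun n => ∫ s in (0 : ℝ)..t, pDirichletForm μ p (φ s) (h n)) atTop (𝓝 0) :=
    tendsto_intervalIntegral_zero_of_abs_le ht (fun n => (hweakK n).1 t ht)
      (fun n s hs => (abs_pDirichletForm_le hμsymm hμnn hloc hC₁ hulf hp (hbp s hs).1 (hh n)).trans
        (mul_le_mul_of_nonneg_left (hbp s hs).2 (div_nonneg (by positivity) hC₁.le)))
      (fun s hs => tendsto_pDirichletForm_zero hμsymm hμnn hloc hC₁ hulf hp (hbp s hs).1 hh hedge)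
  have hν₀ : ∀ v, 0 ≤ ν v := fun v => (hν v).le
  have hφ := (summable_mul_of_summable_abs_mul hν₀ (hb1 t ht).1).hasSum.comp hK
  have hf₀ := (summable_mul_of_summable_abs_mul hν₀ hf₀1).hasSum.comp hK
  exact tendsto_nhds_unique (hφ.congr hmass) (by simpa using hf₀.sub hflux)
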